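/- Let S be a finite nonempty set of positive integers with |S| = n, let π be a probability distribution on S, and for each i ∈ S let p_i ∈ [0,1]. Let f be a random S-map whose values f(i) are chosen independently so that with probability p_i the value f(i) is chosen from S according to π, and otherwise f(i) = 0. Then the probability that f has a cycle equals Σ_{i ∈ S} p_i·π(i). -/

import Mathlib

open MeasureTheory

/-- A cycle of a map `f` relative to a set `S`: a sequence `a 0, …, a (k-1)` of
elements of `S` with `f (a i) = a (i+1)` for `i < k - 1` and `f (a (k-1)) = a 0`. -/
def HasCycle (S : Finset ℕ) (f : ℕ → ℕ) : Prop :=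
  ∃ (k : ℕ) (a : ℕ → ℕ), 0 < k ∧ (∀ i < k, a i ∈ S) ∧
    (∀ i, i + 1 < k → f (a i) = a (i + 1)) ∧ f (a (k - 1)) = a 0

/-!
Induction on `S`, conditioning on the value `u = f v` at some `v ∈ S`. If `u = v`, `f` has a
cycle. Otherwise redirect every arrow into `v` to `u` and delete `v`: the resulting
`(S \ {v})`-map has a cycle iff `f` does, since nonempty forward-invariant subsets of the two maps
correspond to each other. Given `u`, the contracted map is a random map of the same kind with the
weight `π v` moved onto `u` (and lost when `u = 0`), independent of `f v`, so by induction it has a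
cycle with probability `∑_{i ≠ v} p i π i + p u π v` (no second term when `u = 0`). Averaging
over `u`, whose law is `p v π u` on `S`, gives `p v π v + ∑_{i ≠ v} p i π i`.
-/

open Function ProbabilityTheory

theorem hasCycle_iff_exists_mapsTo {S : Finset ℕ} {f : ℕ → ℕ} :
    HasCycle S f ↔ ∃ T ⊆ S, T.Nonempty ∧ Set.MapsTo f T T := by
  constructor
  · rintro ⟨k, a, hk, haS, hstep, hlast⟩
    refine ⟨(Finset.range k).image a, ?_,
      ⟨a 0, Finset.mem_image_of_mem a (Finset.mem_range.2 hk)⟩, ?_⟩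
    · simpa [Finset.image_subset_iff] using haS
    · intro x hx
      obtain ⟨i, hi, rfl⟩ : ∃ i < k, a i = x := by simpa using hx
      rcases Nat.lt_or_ge (i + 1) k with h | h
      · simpa [hstep i h] using ⟨i + 1, h, rfl⟩
      · simpa [show i = k - 1 by omega, hlast] using ⟨0, hk, rfl⟩
  · rintro ⟨T, hTS, ⟨x, hx⟩, hf⟩
    obtain ⟨i, j, hij, hfij⟩ := Set.Finite.exists_lt_map_eq_of_forall_mem
      (f := fun n => f^[n] x) (fun n => hf.iterate n hx) T.finite_toSet
    refine ⟨j - i, fun n => f^[n] (f^[i] x), by omega,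
      fun n _ => hTS (hf.iterate n (hf.iterate i hx)),
      fun n _ => (iterate_succ_apply' f n _).symm, ?_⟩
    show f (f^[j - i - 1] (f^[i] x)) = f^[i] x
    rw [← iterate_succ_apply' f, ← iterate_add_apply, show (j - i - 1).succ + i = j by omega,
      hfij]

theorem hasCycle_insert_iff {T : Finset ℕ} {f : ℕ → ℕ} {v : ℕ} (hfv : f v ≠ v) :
    HasCycle (insert v T) f ↔ HasCycle T (update id v (f v) ∘ f) := by
  simp only [hasCycle_iff_exists_mapsTo]
  constructor
  · rintro ⟨T₀, hT₀, hne, hf⟩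
    by_cases hvT₀ : v ∈ T₀
    · refine ⟨T₀.erase v, Finset.subset_insert_iff.1 hT₀,
        ⟨f v, Finset.mem_erase.2 ⟨hfv, hf hvT₀⟩⟩, fun x hx => ?_⟩
      by_cases hfx : f x = v
      · simp [hfx, hfv, hf hvT₀]
      · simpa [hfx] using hf (Finset.mem_of_mem_erase hx)
    · refine ⟨T₀, (Finset.subset_insert_iff_of_notMem hvT₀).1 hT₀, hne, fun x hx => ?_⟩
      have hfx : f x ≠ v := fun h => hvT₀ (h ▸ hf hx)
      simpa [hfx] using hf hx
  · rintro ⟨T₀, hT₀, hne, hg⟩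
    by_cases hfvT₀ : f v ∈ T₀
    · refine ⟨insert v T₀, Finset.insert_subset_insert v hT₀, Finset.insert_nonempty v T₀,
        fun x hx => ?_⟩
      rcases Finset.mem_insert.1 hx with rfl | hx
      · exact Finset.mem_insert_of_mem hfvT₀
      · by_cases hfx : f x = v
        · simp [hfx]
        · exact Finset.mem_insert_of_mem (by simpa [hfx] using hg hx)
    · refine ⟨T₀, hT₀.trans (Finset.subset_insert v T), hne, fun x hx => ?_⟩
      by_cases hfx : f x = v
      · exact absurd (by simpa [hfx] using hg hx) hfvT₀
      · simpa [hfx] using hg hx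

theorem hasCycle_congr {S : Finset ℕ} {f g : ℕ → ℕ} (h : Set.EqOn f g S) :
    HasCycle S f ↔ HasCycle S g := by
  simp only [hasCycle_iff_exists_mapsTo]
  exact exists_congr fun T => and_congr_right fun hTS => and_congr_right fun _ =>
    ⟨fun hf => hf.congr (h.mono hTS), fun hg => hg.congr (h.symm.mono hTS)⟩

theorem hasCycle_of_apply_eq_self {S : Finset ℕ} {f : ℕ → ℕ} {v : ℕ} (hv : v ∈ S)
    (hfv : f v = v) : HasCycle S f :=
  ⟨1, fun _ => v, one_pos, fun _ _ => hv, fun _ _ => by omega, hfv⟩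

section Measure

variable {Ω : Type*} [MeasurableSpace Ω] {μ : Measure Ω}

theorem measureReal_eq_sum_inter {β : Type*} [MeasurableSpace β] [MeasurableSingletonClass β]
    [IsFiniteMeasure μ] {X : Ω → β} (hX : Measurable X) {U : Finset β}
    (hU : ∀ ω, X ω ∈ U) (E : Set Ω) :
    μ.real E = ∑ u ∈ U, μ.real ({ω | X ω = u} ∩ E) := by
  have h := sum_measureReal_preimage_singleton (μ := μ.restrict E) U
    (fun u _ => hX (measurableSet_singleton u))
  rw [show X ⁻¹' ↑U = Set.univ from Set.eq_univ_of_forall hU,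
    measureReal_restrict_apply_univ] at h
  rw [← h]
  exact Finset.sum_congr rfl fun u _ => measureReal_restrict_apply (hX (measurableSet_singleton u))

theorem measureReal_update_comp_eq [IsFiniteMeasure μ] {X : Ω → ℕ} (hX : Measurable X)
    {v u j : ℕ} (huv : u ≠ v) (hjv : j ≠ v) :
    μ.real {ω | update id v u (X ω) = j} =
      μ.real {ω | X ω = j} + if j = u then μ.real {ω | X ω = v} else 0 := by
  by_cases hju : j = u
  · subst hju
    have hsplit : {ω | update id v j (X ω) = j} = {ω | X ω = j} ∪ {ω | X ω = v} := by
      ext ω; by_cases h : X ω = v <;> simp [update_apply, h]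
    have hdisj : Disjoint {ω | X ω = j} {ω | X ω = v} :=
      Set.disjoint_left.2 fun ω h1 h2 => huv (h1.symm.trans h2)
    rw [if_pos rfl, hsplit, measureReal_union hdisj (hX (measurableSet_singleton v))]
  · have hsame : {ω | update id v u (X ω) = j} = {ω | X ω = j} := by
      ext ω; by_cases h : X ω = v <;> simp [update_apply, h, Ne.symm hjv, Ne.symm hju]
    rw [if_neg hju, add_zero, hsame]

theorem measure_inter_eq_mul_of_notMem {T : Finset ℕ} {v : ℕ} (hv : v ∉ T)
    {F : Ω → ℕ → ℕ}
    (hmeas : ∀ i ∈ insert v T, Measurable fun ω => F ω i)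
    (hindep : iIndepFun (fun (i : {i // i ∈ insert v T}) ω => F ω i.1) μ)
    {Q : (ℕ → ℕ) → Prop} (hQ : ∀ f g, Set.EqOn f g T → Q f → Q g) (u : ℕ) :
    μ ({ω | F ω v = u} ∩ {ω | Q (F ω)}) = μ {ω | F ω v = u} * μ {ω | Q (F ω)} := by
  set w : {i // i ∈ insert v T} := ⟨v, Finset.mem_insert_self v T⟩
  have hT (i : ℕ) (hi : i ∈ T) :
      (⟨i, Finset.mem_insert_of_mem hi⟩ : {i // i ∈ insert v T}) ∈ Finset.univ.erase w := by
    simp only [Finset.mem_erase, Finset.mem_univ, and_true, ne_eq, Subtype.ext_iff, w]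
    rintro rfl
    exact hv hi
  have hQ_preimage : {ω | Q (F ω)} = (fun ω (i : Finset.univ.erase w) => F ω i.1.1) ⁻¹'
      {x | Q fun i => if hi : i ∈ T then x ⟨_, hT i hi⟩ else 0} := by
    ext ω
    constructor <;> apply hQ <;> intro i (hi : i ∈ T) <;> simp [hi]
  rw [hQ_preimage]
  exact (hindep.indepFun_finset {w} (Finset.univ.erase w)
    (Finset.disjoint_singleton_left.2 (Finset.notMem_erase w _))
    (fun i => hmeas i i.2)).measure_inter_preimage_eq_mul
      {x | x ⟨w, Finset.mem_singleton_self w⟩ = u} _ .of_discrete .of_discrete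

theorem measureReal_inter_hasCycle_insert {T : Finset ℕ} {v u : ℕ} (hv : v ∉ T)
    (huv : u ≠ v)
    {F : Ω → ℕ → ℕ} (hmeas : ∀ i ∈ insert v T, Measurable fun ω => F ω i)
    (hindep : iIndepFun (fun (i : {i // i ∈ insert v T}) ω => F ω i.1) μ) :
    μ.real ({ω | F ω v = u} ∩ {ω | HasCycle (insert v T) (F ω)}) =
      μ.real {ω | F ω v = u} * μ.real {ω | HasCycle T (update id v u ∘ F ω)} := by
  have hcontract : {ω | F ω v = u} ∩ {ω | HasCycle (insert v T) (F ω)} =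
      {ω | F ω v = u} ∩ {ω | HasCycle T (update id v u ∘ F ω)} := by
    ext ω
    refine and_congr_right fun (h : F ω v = u) => ?_
    show HasCycle (insert v T) (F ω) ↔ HasCycle T (update id v u ∘ F ω)
    rw [hasCycle_insert_iff (by rwa [h]), h]
  rw [hcontract, measureReal_def, measure_inter_eq_mul_of_notMem hv hmeas hindep
    (Q := fun f => HasCycle T (update id v u ∘ f))
    (fun f g h => (hasCycle_congr fun i hi => congrArg (update id v u) (h hi)).1) u,
    ENNReal.toReal_mul, measureReal_def, measureReal_def]

theorem measureReal_hasCycle_insert [IsProbabilityMeasure μ] {T : Finset ℕ} {v : ℕ}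
    (hvT : v ∉ T) (hv0 : v ≠ 0) (hT0 : 0 ∉ T) {π p : ℕ → ℝ} {F : Ω → ℕ → ℕ}
    (hFv : ∀ ω, F ω v ∈ insert v T ∨ F ω v = 0)
    (hmeas : ∀ i ∈ insert v T, Measurable fun ω => F ω i)
    (hindep : iIndepFun (fun (i : {i // i ∈ insert v T}) ω => F ω i.1) μ)
    (hlaw : ∀ j ∈ insert v T, μ.real {ω | F ω v = j} = p v * π j)
    (hcontract : ∀ u ∈ insert 0 T, μ.real {ω | HasCycle T (update id v u ∘ F ω)} =
      ∑ i ∈ T, p i * π i + if u ∈ T then p u * π v else 0) :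
    μ.real {ω | HasCycle (insert v T) (F ω)} = ∑ i ∈ insert v T, p i * π i := by
  set A := ∑ i ∈ T, p i * π i
  have hvT0 : v ∉ insert 0 T := by simp [hv0, hvT]
  have hFv' (ω : Ω) : F ω v ∈ insert v (insert 0 T) := by grind
  have hmeasv := hmeas v (Finset.mem_insert_self v T)
  have hfixed :
      μ.real ({ω | F ω v = v} ∩ {ω | HasCycle (insert v T) (F ω)}) = p v * π v := by
    have hsub : {ω | F ω v = v} ⊆ {ω | HasCycle (insert v T) (F ω)} :=
      fun ω h => hasCycle_of_apply_eq_self (Finset.mem_insert_self v T) h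
    rw [Set.inter_eq_left.2 hsub, hlaw v (Finset.mem_insert_self v T)]
  have hmoved (u : ℕ) (hu : u ∈ insert 0 T) :
      μ.real ({ω | F ω v = u} ∩ {ω | HasCycle (insert v T) (F ω)}) =
        μ.real {ω | F ω v = u} * (A + if u ∈ T then p u * π v else 0) := by
    rw [measureReal_inter_hasCycle_insert hvT (by grind) hmeas hindep, hcontract u hu]
  have hlawT (u : ℕ) (hu : u ∈ T) : μ.real {ω | F ω v = u} = p v * π u :=
    hlaw u (Finset.mem_insert_of_mem hu)
  have htotal := measureReal_eq_sum_inter (μ := μ) hmeasv hFv' Set.univ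
  simp only [Set.inter_univ, Finset.sum_insert hvT0, Finset.sum_insert hT0, probReal_univ,
    Finset.sum_congr rfl hlawT, hlaw v (Finset.mem_insert_self v T)] at htotal
  have hsum : ∑ u ∈ T, p v * π u * (A + p u * π v) =
      A * ∑ u ∈ T, p v * π u + p v * π v * A := by
    rw [Finset.mul_sum, Finset.mul_sum, ← Finset.sum_add_distrib]
    exact Finset.sum_congr rfl fun u _ => by ring
  rw [measureReal_eq_sum_inter hmeasv hFv', Finset.sum_insert hvT0, hfixed,
    Finset.sum_congr rfl hmoved, Finset.sum_insert hT0, if_neg hT0, add_zero,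
    Finset.sum_congr rfl fun u hu => by rw [if_pos hu, hlawT u hu], hsum, Finset.sum_insert hvT]
  linear_combination -A * htotal

theorem measureReal_hasCycle_eq_sum [IsProbabilityMeasure μ] (S : Finset ℕ) (hS0 : 0 ∉ S)
    (π p : ℕ → ℝ) (F : Ω → ℕ → ℕ)
    (hSmap : ∀ ω, ∀ i ∈ S, F ω i ∈ S ∨ F ω i = 0)
    (hmeas : ∀ i ∈ S, Measurable fun ω => F ω i)
    (hindep : iIndepFun (fun (i : {i // i ∈ S}) ω => F ω i.1) μ)
    (hval : ∀ i ∈ S, ∀ j ∈ S, μ.real {ω | F ω i = j} = p i * π j) :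
    μ.real {ω | HasCycle S (F ω)} = ∑ i ∈ S, p i * π i := by
  induction S using Finset.induction_on generalizing π F with
  | empty => simp [hasCycle_iff_exists_mapsTo]
  | insert v T hvT ih =>
    have hT0 : 0 ∉ T := fun h => hS0 (Finset.mem_insert_of_mem h)
    refine measureReal_hasCycle_insert hvT (fun h => hS0 (h ▸ Finset.mem_insert_self v T)) hT0
      (hSmap · v (Finset.mem_insert_self v T)) hmeas hindep (hval v (Finset.mem_insert_self v T))
      fun u hu => ?_
    have huv : u ≠ v := by grind
    rw [ih hT0 (fun j => π j + if j = u then π v else 0) (fun ω => update id v u ∘ F ω)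
      ?_ ?_ ?_ ?_]
    · simp [mul_add, Finset.sum_add_distrib]
    · intro ω i hi
      have := hSmap ω i (Finset.mem_insert_of_mem hi)
      grind [update_apply]
    · exact fun i hi => measurable_from_nat.comp (hmeas i (Finset.mem_insert_of_mem hi))
    · have hinj : Injective fun i : {i // i ∈ T} =>
          (⟨i.1, Finset.mem_insert_of_mem i.2⟩ : {i // i ∈ insert v T}) :=
        fun _ _ h => Subtype.ext (Subtype.mk.inj h)
      exact (hindep.precomp hinj).comp _ fun _ => measurable_from_nat
    · intro i hi j hj
      have hi' : i ∈ insert v T := Finset.mem_insert_of_mem hi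
      show μ.real {ω | update id v u (F ω i) = j} = _
      rw [measureReal_update_comp_eq (hmeas i hi') huv (fun h => hvT (h ▸ hj)),
        hval i hi' j (Finset.mem_insert_of_mem hj), hval i hi' v (Finset.mem_insert_self v T)]
      split_ifs <;> ring

end Measure

theorem cycle_prob_weighted_general
    (S : Finset ℕ) (hpos : ∀ i ∈ S, 0 < i)
    (π : ℕ → ℝ)
    (p : ℕ → ℝ)
    {Ω : Type*} [MeasurableSpace Ω] (μ : Measure Ω) [IsProbabilityMeasure μ]
    (F : Ω → ℕ → ℕ)
    (hSmap : ∀ ω, ∀ i ∈ S, F ω i ∈ S ∨ F ω i = 0)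
    (hmeas : ∀ i ∈ S, Measurable fun ω => F ω i)
    (hindep : ProbabilityTheory.iIndepFun
      (fun (i : {i // i ∈ S}) ω => F ω i.val) μ)
    (hval : ∀ i ∈ S, ∀ j ∈ S, (μ {ω | F ω i = j}).toReal = p i * π j) :
    (μ {ω | HasCycle S (F ω)}).toReal = ∑ i ∈ S, p i * π i :=
  measureReal_hasCycle_eq_sum S (fun h => (hpos 0 h).false) π p F hSmap hmeas hindep hval

/-- Let `S` be a finite nonempty set of positive integers, `π` a probability
distribution on `S`, and `p i ∈ [0,1]` for each `i ∈ S`.  Let `F` be a random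
`S`-map whose values are independent, with `F i` distributed according to `π`
with probability `p i` and equal to `0` otherwise (so `P[F i = j] = p i * π j`
for `j ∈ S` and `P[F i = 0] = 1 - p i`).  Then the probability that `F` has a
cycle equals `∑ i ∈ S, p i * π i`. -/
theorem cycle_prob_weighted
    (S : Finset ℕ) (hS : S.Nonempty) (hpos : ∀ i ∈ S, 0 < i)
    (π : ℕ → ℝ) (hπ0 : ∀ i ∈ S, 0 ≤ π i) (hπ1 : ∑ i ∈ S, π i = 1)
    (p : ℕ → ℝ) (hp : ∀ i ∈ S, 0 ≤ p i ∧ p i ≤ 1)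
    {Ω : Type*} [MeasurableSpace Ω] (μ : Measure Ω) [IsProbabilityMeasure μ]
    (F : Ω → ℕ → ℕ)
    (hSmap : ∀ ω, ∀ i ∈ S, F ω i ∈ S ∨ F ω i = 0)
    (hmeas : ∀ i ∈ S, Measurable fun ω => F ω i)
    (hindep : ProbabilityTheory.iIndepFun
      (fun (i : {i // i ∈ S}) ω => F ω i.val) μ)
    (hzero : ∀ i ∈ S, (μ {ω | F ω i = 0}).toReal = 1 - p i)
    (hval : ∀ i ∈ S, ∀ j ∈ S, (μ {ω | F ω i = j}).toReal = p i * π j) :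
    (μ {ω | HasCycle S (F ω)}).toReal = ∑ i ∈ S, p i * π i :=
  cycle_prob_weighted_general S hpos π p μ F hSmap hmeas hindep hval
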